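/- Let r ≥ 3 and let G be a linear r-graph that contains neither a triangle nor the grid hypergraph H_r as a subgraph. Then every homomorphism π from H_r to the box product G□G falls into one of two types: either π maps all of H_r into a single (horizontal or vertical) edge of G□G, or π maps the vertices (i,j) of H_r to vertices (x_i, y_j) of G□G where {x₁,…,x_r} and {y₁,…,y_r} are edges of G, so that the r rows of H_r map to r horizontal edges and the r columns map to r vertical edges of G□G (or vice versa after swapping the roles of rows and columns). -/

import Mathlib

open MeasureTheory
open scoped Classical

/-- Homomorphism density of a symmetric `r`-variable kernel in an `r`-graph whose
edges are indexed by `E` and given as (injective) `r`-tuples of vertices: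
`t_H(f) = ∫ ∏_{e ∈ E(H)} f(x_{e 0}, …, x_{e (r-1)}) dx`. -/
noncomputable def hypDensity {V E : Type} [Fintype V] [Fintype E] (r : ℕ)
    (edge : E → Fin r → V) (f : (Fin r → unitInterval) → ℝ) : ℝ :=
  ∫ x : V → unitInterval, ∏ e : E, f (fun i => x (edge e i))

/-- An `r`-graph is positive if `t_H(f) ≥ 0` for every bounded measurable
symmetric kernel `f : [0,1]^r → ℝ`. -/
def HypPositive {V E : Type} [Fintype V] [Fintype E] (r : ℕ)
    (edge : E → Fin r → V) : Prop :=
  ∀ f : (Fin r → unitInterval) → ℝ,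
    (∀ (σ : Equiv.Perm (Fin r)) (v : Fin r → unitInterval), f (v ∘ σ) = f v) →
    Measurable f → (∃ C, ∀ v, |f v| ≤ C) →
    0 ≤ hypDensity r edge f

/-- The vertex set of an edge of an `r`-graph. -/
noncomputable def hedgeSet {V E : Type} [Fintype V] (r : ℕ) (edge : E → Fin r → V) (e : E) :
    Finset V :=
  Finset.image (edge e) Finset.univ
/-- The edges of the `r × r` grid `r`-graph `H_r`: its vertices are the nodes of an
`r × r` grid, `Sum.inl i` is the `i`-th row and `Sum.inr j` is the `j`-th column. -/
def gridEdge (r : ℕ) : (Fin r ⊕ Fin r) → Fin r → Fin r × Fin r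
  | Sum.inl i => fun j => (i, j)
  | Sum.inr j => fun i => (i, j)

/-- The edges of the box product `G □ G` of an `r`-graph `G` with itself:
`Sum.inl (f, y)` is the horizontal edge `{(x₁,y),…,(x_r,y)}` where
`{x₁,…,x_r}` is the edge `f` of `G`, and `Sum.inr (x, f)` is the vertical edge
`{(x,y₁),…,(x,y_r)}` where `{y₁,…,y_r}` is the edge `f` of `G`. -/
def boxEdge {W F : Type} (r : ℕ) (gedge : F → Fin r → W) :
    (F × W ⊕ W × F) → Fin r → W × W
  | Sum.inl (f, y) => fun i => (gedge f i, y)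
  | Sum.inr (x, f) => fun i => (x, gedge f i)

/-!
Every row and column of the grid is mapped onto a horizontal or a vertical edge of `G □ G`.
Rows of both kinds cannot coexist: a column through a horizontal row `a` and a vertical row `a'`
must repeat either the constant first coordinate of row `a'` inside row `a` or the constant
second coordinate of row `a` inside row `a'`, and each happens for at most one column, while there
are `r ≥ 3` columns. The same holds for the columns. If rows and columns have different kinds,
`π (i, j) = (x i, y j)`. If all lines are vertical, the first coordinate of `π` is constant and
the second is a homomorphism `H_r → G`, which is not injective since `G` is `H_r`-free. In a
linear triangle-free `G` such a homomorphism lands in a single edge. Two rows on different edges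
are disjoint: otherwise, by linearity and triangle-freeness, every column would meet one of them
in their common vertex, which is possible for at most two columns. So a repeated vertex puts two
rows on one edge; by linearity every column then lies on that edge, and hence so does every row.
-/

open Finset Function

theorem Fintype.card_le_two_of_forall_eq_or_eq {ι α β : Type*} [Fintype ι] {u : ι → α} {v : ι → β}
    (hu : Injective u) (hv : Injective v) {a : α} {b : β}
    (h : ∀ j, u j = a ∨ v j = b) : Fintype.card ι ≤ 2 := by
  have hcover : univ = univ.filter (u · = a) ∪ univ.filter (v · = b) := by
    ext j; simpa using h j
  have hu1 : #(univ.filter (u · = a)) ≤ 1 := card_le_one.mpr fun j hj k hk =>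
    hu ((mem_filter.mp hj).2.trans (mem_filter.mp hk).2.symm)
  have hv1 : #(univ.filter (v · = b)) ≤ 1 := card_le_one.mpr fun j hj k hk =>
    hv ((mem_filter.mp hj).2.trans (mem_filter.mp hk).2.symm)
  calc Fintype.card ι = #(univ.filter (u · = a) ∪ univ.filter (v · = b)) := by
        rw [← hcover, card_univ]
    _ ≤ #(univ.filter (u · = a)) + #(univ.filter (v · = b)) := card_union_le _ _
    _ ≤ 2 := by omega

theorem Finset.mem_of_image_univ_eq {ι α : Type*} [Fintype ι] [DecidableEq α] {x : ι → α}
    {s : Finset α} (h : univ.image x = s) (j : ι) : x j ∈ s :=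
  h ▸ mem_image_of_mem x (mem_univ j)

theorem Finset.image_eq_image_mk_right_iff {α β γ : Type*} [DecidableEq β] [DecidableEq γ]
    {q : α → β × γ} {s : Finset α} {x : β} {t : Finset γ} :
    s.image q = t.image (x, ·) ↔ (∀ p ∈ s, (q p).1 = x) ∧ s.image (fun p => (q p).2) = t := by
  constructor
  · intro h
    refine ⟨fun p hp => ?_, ?_⟩
    · obtain ⟨w, -, hw⟩ := mem_image.mp (h ▸ mem_image_of_mem q hp)
      rw [← hw]
    · simpa [image_image, comp_def] using congrArg (image Prod.snd) h
  · rintro ⟨hx, rfl⟩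
    rw [image_image]
    exact image_congr fun p hp => Prod.ext (hx p hp) rfl

theorem Finset.image_eq_image_mk_left_iff {α β γ : Type*} [DecidableEq β] [DecidableEq γ]
    {q : α → β × γ} {s : Finset α} {t : Finset β} {y : γ} :
    s.image q = t.image (·, y) ↔ s.image (fun p => (q p).1) = t ∧ ∀ p ∈ s, (q p).2 = y := by
  constructor
  · intro h
    refine ⟨?_, fun p hp => ?_⟩
    · simpa [image_image, comp_def] using congrArg (image Prod.fst) h
    · obtain ⟨w, -, hw⟩ := mem_image.mp (h ▸ mem_image_of_mem q hp)
      rw [← hw]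
  · rintro ⟨rfl, hy⟩
    rw [image_image]
    exact image_congr fun p hp => Prod.ext rfl (hy p hp)

def IsHypHom {V E V' E' : Type} [Fintype V] [Fintype V'] [DecidableEq V'] (r : ℕ)
    (edge : E → Fin r → V) (edge' : E' → Fin r → V') (φ : V → V') : Prop :=
  ∀ e, ∃ e', (hedgeSet r edge e).image φ = hedgeSet r edge' e'

section LinearHypergraph

variable {W F : Type} [Fintype W] {r : ℕ} (gedge : F → Fin r → W)

def IsLinear : Prop :=
  ∀ f f' : F, f ≠ f' → #(hedgeSet r gedge f ∩ hedgeSet r gedge f') ≤ 1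

def IsTriangleFree : Prop :=
  ¬ ∃ f₁ f₂ f₃ : F,
    #(hedgeSet r gedge f₁ ∩ hedgeSet r gedge f₂) = 1 ∧
    #(hedgeSet r gedge f₁ ∩ hedgeSet r gedge f₃) = 1 ∧
    #(hedgeSet r gedge f₂ ∩ hedgeSet r gedge f₃) = 1 ∧
    hedgeSet r gedge f₁ ∩ hedgeSet r gedge f₂ ∩ hedgeSet r gedge f₃ = ∅

variable {gedge}

theorem injective_of_image_univ_eq_hedgeSet {f : F} (hf : Injective (gedge f)) {x : Fin r → W}
    (h : univ.image x = hedgeSet r gedge f) : Injective x := by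
  have hcard : #(univ.image x) = #(univ : Finset (Fin r)) := by
    rw [h, hedgeSet, card_image_of_injective _ hf]
  rw [← Set.injOn_univ, ← coe_univ]
  exact card_image_iff.mp hcard

theorem IsLinear.eq_of_mem (hG : IsLinear gedge) {f f' : F} (hff : f ≠ f') {u v : W}
    (hu : u ∈ hedgeSet r gedge f) (hu' : u ∈ hedgeSet r gedge f')
    (hv : v ∈ hedgeSet r gedge f) (hv' : v ∈ hedgeSet r gedge f') : u = v :=
  card_le_one.mp (hG f f' hff) u (mem_inter.mpr ⟨hu, hu'⟩) v (mem_inter.mpr ⟨hv, hv'⟩)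

theorem IsTriangleFree.inter_nonempty (hT : IsTriangleFree gedge) (hG : IsLinear gedge)
    {f₁ f₂ f₃ : F} (h₁₂ : f₁ ≠ f₂) (h₁₃ : f₁ ≠ f₃) (h₂₃ : f₂ ≠ f₃)
    (w₁₂ : (hedgeSet r gedge f₁ ∩ hedgeSet r gedge f₂).Nonempty)
    (w₁₃ : (hedgeSet r gedge f₁ ∩ hedgeSet r gedge f₃).Nonempty)
    (w₂₃ : (hedgeSet r gedge f₂ ∩ hedgeSet r gedge f₃).Nonempty) :
    (hedgeSet r gedge f₁ ∩ hedgeSet r gedge f₂ ∩ hedgeSet r gedge f₃).Nonempty := by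
  by_contra h
  exact hT ⟨f₁, f₂, f₃, le_antisymm (hG _ _ h₁₂) (card_pos.mpr w₁₂),
    le_antisymm (hG _ _ h₁₃) (card_pos.mpr w₁₃), le_antisymm (hG _ _ h₂₃) (card_pos.mpr w₂₃),
    not_nonempty_iff_eq_empty.mp h⟩

end LinearHypergraph

theorem image_hedgeSet_gridEdge_inl {α : Type*} [DecidableEq α] {r : ℕ}
    (φ : Fin r × Fin r → α) (i : Fin r) :
    (hedgeSet r (gridEdge r) (.inl i)).image φ = univ.image (fun j => φ (i, j)) :=
  by ext; simp [hedgeSet, gridEdge]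

theorem image_hedgeSet_gridEdge_inr {α : Type*} [DecidableEq α] {r : ℕ}
    (φ : Fin r × Fin r → α) (j : Fin r) :
    (hedgeSet r (gridEdge r) (.inr j)).image φ = univ.image (fun i => φ (i, j)) :=
  by ext; simp [hedgeSet, gridEdge]

section GridInLinearHypergraph

variable {W F : Type} [Fintype W] {r : ℕ} {gedge : F → Fin r → W}
  {b : Fin r × Fin r → W} {f g : Fin r → F}

theorem col_eq_of_row_eq (hG : IsLinear gedge) (hinj : ∀ f, Injective (gedge f))
    (hrow : ∀ i, univ.image (fun j => b (i, j)) = hedgeSet r gedge (f i))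
    (hcol : ∀ j, univ.image (fun i => b (i, j)) = hedgeSet r gedge (g j))
    {i i' : Fin r} (hii : i ≠ i') (hf : f i = f i') (j : Fin r) : g j = f i := by
  by_contra hgf
  have hcol_inj := injective_of_image_univ_eq_hedgeSet (hinj _) (hcol j)
  refine hii (hcol_inj (hG.eq_of_mem hgf (mem_of_image_univ_eq (hcol j) i)
    (mem_of_image_univ_eq (hrow i) j) (mem_of_image_univ_eq (hcol j) i') ?_))
  exact hf ▸ mem_of_image_univ_eq (hrow i') j

theorem disjoint_of_row_ne (hr : 3 ≤ r) (hG : IsLinear gedge) (hT : IsTriangleFree gedge)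
    (hinj : ∀ f, Injective (gedge f))
    (hrow : ∀ i, univ.image (fun j => b (i, j)) = hedgeSet r gedge (f i))
    (hcol : ∀ j, univ.image (fun i => b (i, j)) = hedgeSet r gedge (g j))
    {a a' : Fin r} (hff : f a ≠ f a') :
    Disjoint (hedgeSet r gedge (f a)) (hedgeSet r gedge (f a')) := by
  refine disjoint_left.mpr fun p hp hp' => ?_
  have hcover : ∀ j, b (a, j) = p ∨ b (a', j) = p := by
    intro j
    have ha := mem_of_image_univ_eq (hrow a) j
    have ha' := mem_of_image_univ_eq (hrow a') j
    have hga := mem_of_image_univ_eq (hcol j) a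
    have hga' := mem_of_image_univ_eq (hcol j) a'
    by_cases h₁ : g j = f a
    · rw [h₁] at hga'
      exact .inr (hG.eq_of_mem hff hga' ha' hp hp')
    by_cases h₂ : g j = f a'
    · rw [h₂] at hga
      exact .inl (hG.eq_of_mem hff ha hga hp hp')
    -- `f a`, `f a'` and `g j` pairwise meet, so triangle-freeness gives a common vertex
    obtain ⟨w, hw⟩ := hT.inter_nonempty hG hff (Ne.symm h₁) (Ne.symm h₂)
      ⟨p, mem_inter.mpr ⟨hp, hp'⟩⟩ ⟨_, mem_inter.mpr ⟨ha, hga⟩⟩ ⟨_, mem_inter.mpr ⟨ha', hga'⟩⟩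
    simp only [mem_inter] at hw
    exact .inl ((hG.eq_of_mem (Ne.symm h₁) ha hga hw.1.1 hw.2).trans
      (hG.eq_of_mem hff hw.1.1 hw.1.2 hp hp'))
  have := Fintype.card_le_two_of_forall_eq_or_eq
    (injective_of_image_univ_eq_hedgeSet (hinj _) (hrow a))
    (injective_of_image_univ_eq_hedgeSet (hinj _) (hrow a')) hcover
  rw [Fintype.card_fin] at this
  omega

theorem IsHypHom.exists_forall_image_eq_of_not_injective (hr : 3 ≤ r) (hG : IsLinear gedge)
    (hT : IsTriangleFree gedge) (hinj : ∀ f, Injective (gedge f))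
    (hb : IsHypHom r (gridEdge r) gedge b) (hb_inj : ¬ Injective b) :
    ∃ f, ∀ e, (hedgeSet r (gridEdge r) e).image b = hedgeSet r gedge f := by
  choose f hrow using fun i => hb (.inl i)
  choose g hcol using fun j => hb (.inr j)
  simp only [image_hedgeSet_gridEdge_inl] at hrow
  simp only [image_hedgeSet_gridEdge_inr] at hcol
  obtain ⟨⟨i, j⟩, ⟨i', j'⟩, hbb, hne⟩ := not_injective_iff.mp hb_inj
  have hii : i ≠ i' := by
    rintro rfl
    exact hne (Prod.ext rfl (injective_of_image_univ_eq_hedgeSet (hinj _) (hrow i) hbb))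
  have hjj : j ≠ j' := by
    rintro rfl
    exact hne (Prod.ext (injective_of_image_univ_eq_hedgeSet (hinj _) (hcol j) hbb) rfl)
  have hfi : f i = f i' := by
    by_contra h
    exact disjoint_left.mp (disjoint_of_row_ne hr hG hT hinj hrow hcol h)
      (mem_of_image_univ_eq (hrow i) j) (hbb ▸ mem_of_image_univ_eq (hrow i') j')
  have hg : ∀ k, g k = f i := col_eq_of_row_eq hG hinj hrow hcol hii hfi
  have hf : ∀ k, f k = g j := col_eq_of_row_eq (b := fun p => b p.swap) hG hinj hcol hrow hjj
    ((hg j).trans (hg j').symm)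
  refine ⟨f i, ?_⟩
  rintro (k | k)
  · rw [image_hedgeSet_gridEdge_inl, hrow k, hf k, hg j]
  · rw [image_hedgeSet_gridEdge_inr, hcol k, hg k]

end GridInLinearHypergraph

section BoxProduct

variable {W F : Type} [Fintype W] {r : ℕ} (gedge : F → Fin r → W)

theorem hedgeSet_boxEdge_inl (f : F) (y : W) :
    hedgeSet r (boxEdge r gedge) (.inl (f, y)) = (hedgeSet r gedge f).image (·, y) := by
  ext; simp [hedgeSet, boxEdge]

theorem hedgeSet_boxEdge_inr (x : W) (f : F) :
    hedgeSet r (boxEdge r gedge) (.inr (x, f)) = (hedgeSet r gedge f).image (x, ·) := by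
  ext; simp [hedgeSet, boxEdge]

def IsHorizontalLine {ι : Type*} [Fintype ι] (q : ι → W × W) : Prop :=
  ∃ f y, univ.image (fun j => (q j).1) = hedgeSet r gedge f ∧ ∀ j, (q j).2 = y

def IsVerticalLine {ι : Type*} [Fintype ι] (q : ι → W × W) : Prop :=
  ∃ x f, (∀ j, (q j).1 = x) ∧ univ.image (fun j => (q j).2) = hedgeSet r gedge f

variable {gedge}

theorem isHorizontalLine_or_isVerticalLine {ι : Type*} [Fintype ι] {q : ι → W × W}
    {e' : F × W ⊕ W × F} (h : univ.image q = hedgeSet r (boxEdge r gedge) e') :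
    IsHorizontalLine gedge q ∨ IsVerticalLine gedge q := by
  rcases e' with ⟨f, y⟩ | ⟨x, f⟩
  · rw [hedgeSet_boxEdge_inl, image_eq_image_mk_left_iff] at h
    exact .inl ⟨f, y, h.1, fun j => h.2 j (mem_univ j)⟩
  · rw [hedgeSet_boxEdge_inr, image_eq_image_mk_right_iff] at h
    exact .inr ⟨x, f, fun j => h.1 j (mem_univ j), h.2⟩

variable {π : Fin r × Fin r → W × W}

theorem IsHypHom.row_isLine (hπ : IsHypHom r (gridEdge r) (boxEdge r gedge) π) (i : Fin r) :
    IsHorizontalLine gedge (fun j => π (i, j)) ∨ IsVerticalLine gedge (fun j => π (i, j)) := by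
  obtain ⟨e', he'⟩ := hπ (.inl i)
  rw [image_hedgeSet_gridEdge_inl] at he'
  exact isHorizontalLine_or_isVerticalLine he'

theorem IsHypHom.col_isLine (hπ : IsHypHom r (gridEdge r) (boxEdge r gedge) π) (j : Fin r) :
    IsHorizontalLine gedge (fun i => π (i, j)) ∨ IsVerticalLine gedge (fun i => π (i, j)) := by
  obtain ⟨e', he'⟩ := hπ (.inr j)
  rw [image_hedgeSet_gridEdge_inr] at he'
  exact isHorizontalLine_or_isVerticalLine he'

theorem forall_row_isVerticalLine_or_forall_row_isHorizontalLine (hr : 3 ≤ r)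
    (hinj : ∀ f, Injective (gedge f))
    (hrow : ∀ i, IsHorizontalLine gedge (fun j => π (i, j)) ∨
      IsVerticalLine gedge (fun j => π (i, j)))
    (hcol : ∀ j, IsHorizontalLine gedge (fun i => π (i, j)) ∨
      IsVerticalLine gedge (fun i => π (i, j))) :
    (∀ i, IsVerticalLine gedge (fun j => π (i, j))) ∨
      ∀ i, IsHorizontalLine gedge (fun j => π (i, j)) := by
  by_contra! h
  obtain ⟨⟨a, ha⟩, ⟨a', ha'⟩⟩ := h
  obtain ⟨fa, y, hfa, hy⟩ := (hrow a).resolve_right ha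
  obtain ⟨x, fa', hx, hfa'⟩ := (hrow a').resolve_left ha'
  -- column `j` is a line through `π (a, j)` and `π (a', j)`: they share its constant coordinate
  have hcover : ∀ j, (π (a, j)).1 = x ∨ (π (a', j)).2 = y := by
    intro j
    rcases hcol j with ⟨-, y', -, hy'⟩ | ⟨x', -, hx', -⟩
    · exact .inr ((hy' a').trans ((hy' a).symm.trans (hy j)))
    · exact .inl ((hx' a).trans ((hx' a').symm.trans (hx j)))
  have := Fintype.card_le_two_of_forall_eq_or_eq
    (injective_of_image_univ_eq_hedgeSet (hinj _) hfa)
    (injective_of_image_univ_eq_hedgeSet (hinj _) hfa') hcover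
  rw [Fintype.card_fin] at this
  omega

theorem exists_eq_mk_of_row_isVerticalLine_of_col_isHorizontalLine [NeZero r]
    (hrow : ∀ i, IsVerticalLine gedge (fun j => π (i, j)))
    (hcol : ∀ j, IsHorizontalLine gedge (fun i => π (i, j))) :
    ∃ x y : Fin r → W,
      (∃ fx : F, univ.image x = hedgeSet r gedge fx) ∧
      (∃ fy : F, univ.image y = hedgeSet r gedge fy) ∧
      ∀ i j, π (i, j) = (x i, y j) := by
  choose x fr hx hfr using hrow
  choose fc y hfc hy using hcol
  refine ⟨x, y, ⟨fc 0, ?_⟩, ⟨fr 0, ?_⟩, fun i j => Prod.ext (hx i j) (hy j i)⟩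
  · rw [← hfc 0]
    exact image_congr fun i _ => (hx i 0).symm
  · rw [← hfr 0]
    exact image_congr fun j _ => (hy j 0).symm

theorem exists_forall_image_eq_of_isVerticalLine [NeZero r] (hr : 3 ≤ r) (hG : IsLinear gedge)
    (hT : IsTriangleFree gedge) (hinj : ∀ f, Injective (gedge f))
    (hgrid : ¬ ∃ ψ, Injective ψ ∧ IsHypHom r (gridEdge r) gedge ψ)
    (hrow : ∀ i, IsVerticalLine gedge (fun j => π (i, j)))
    (hcol : ∀ j, IsVerticalLine gedge (fun i => π (i, j))) :
    ∃ e', ∀ e, (hedgeSet r (gridEdge r) e).image π = hedgeSet r (boxEdge r gedge) e' := by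
  choose x fr hx hfr using hrow
  choose x' fc hx' hfc using hcol
  have hb : IsHypHom r (gridEdge r) gedge (fun p => (π p).2) := by
    rintro (i | j)
    · exact ⟨fr i, by rw [image_hedgeSet_gridEdge_inl]; exact hfr i⟩
    · exact ⟨fc j, by rw [image_hedgeSet_gridEdge_inr]; exact hfc j⟩
  obtain ⟨f, hf⟩ := hb.exists_forall_image_eq_of_not_injective hr hG hT hinj
    fun hb_inj => hgrid ⟨_, hb_inj, hb⟩
  refine ⟨.inr (x' 0, f), fun e => ?_⟩
  rw [hedgeSet_boxEdge_inr, image_eq_image_mk_right_iff]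
  exact ⟨fun ⟨i, j⟩ _ => by rw [hx i j, ← hx i 0, hx' 0 i], hf e⟩

theorem exists_forall_image_eq_of_isHorizontalLine [NeZero r] (hr : 3 ≤ r) (hG : IsLinear gedge)
    (hT : IsTriangleFree gedge) (hinj : ∀ f, Injective (gedge f))
    (hgrid : ¬ ∃ ψ, Injective ψ ∧ IsHypHom r (gridEdge r) gedge ψ)
    (hrow : ∀ i, IsHorizontalLine gedge (fun j => π (i, j)))
    (hcol : ∀ j, IsHorizontalLine gedge (fun i => π (i, j))) :
    ∃ e', ∀ e, (hedgeSet r (gridEdge r) e).image π = hedgeSet r (boxEdge r gedge) e' := by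
  choose fr y hfr hy using hrow
  choose fc y' hfc hy' using hcol
  have hb : IsHypHom r (gridEdge r) gedge (fun p => (π p).1) := by
    rintro (i | j)
    · exact ⟨fr i, by rw [image_hedgeSet_gridEdge_inl]; exact hfr i⟩
    · exact ⟨fc j, by rw [image_hedgeSet_gridEdge_inr]; exact hfc j⟩
  obtain ⟨f, hf⟩ := hb.exists_forall_image_eq_of_not_injective hr hG hT hinj
    fun hb_inj => hgrid ⟨_, hb_inj, hb⟩
  refine ⟨.inl (f, y 0), fun e => ?_⟩
  rw [hedgeSet_boxEdge_inl, image_eq_image_mk_left_iff]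
  exact ⟨hf e, fun ⟨i, j⟩ _ => by rw [hy' j i, ← hy' j 0, hy 0 j]⟩

end BoxProduct

theorem grid_hom_to_box_classification_general
    {W F : Type} [Fintype W] (r : ℕ) (hr : 3 ≤ r)
    (gedge : F → Fin r → W) (hinj : ∀ f, Function.Injective (gedge f))
    (hlinear : ∀ f f' : F, f ≠ f' →
      (hedgeSet r gedge f ∩ hedgeSet r gedge f').card ≤ 1)
    (htriangle : ¬ ∃ f₁ f₂ f₃ : F,
      (hedgeSet r gedge f₁ ∩ hedgeSet r gedge f₂).card = 1 ∧
      (hedgeSet r gedge f₁ ∩ hedgeSet r gedge f₃).card = 1 ∧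
      (hedgeSet r gedge f₂ ∩ hedgeSet r gedge f₃).card = 1 ∧
      hedgeSet r gedge f₁ ∩ hedgeSet r gedge f₂ ∩ hedgeSet r gedge f₃ = ∅)
    (hgridfree : ¬ ∃ ψ : Fin r × Fin r → W, Function.Injective ψ ∧
      ∀ e : Fin r ⊕ Fin r, ∃ f : F,
        Finset.image ψ (hedgeSet r (gridEdge r) e) = hedgeSet r gedge f)
    (π : Fin r × Fin r → W × W)
    (hhom : ∀ e : Fin r ⊕ Fin r, ∃ e' : F × W ⊕ W × F,
      Finset.image π (hedgeSet r (gridEdge r) e) = hedgeSet r (boxEdge r gedge) e') :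
    -- first type: `π` maps all of `H_r` into a single edge of `G □ G`
    (∃ e' : F × W ⊕ W × F, ∀ e : Fin r ⊕ Fin r,
      Finset.image π (hedgeSet r (gridEdge r) e) = hedgeSet r (boxEdge r gedge) e') ∨
    -- second type: `π (i,j) = (x i, y j)` with `x`, `y` enumerating edges of `G`
    (∃ x y : Fin r → W,
      (∃ fx : F, Finset.image x Finset.univ = hedgeSet r gedge fx) ∧
      (∃ fy : F, Finset.image y Finset.univ = hedgeSet r gedge fy) ∧
      (∀ i j : Fin r, π (i, j) = (x i, y j))) ∨
    -- second type with the roles of rows and columns swapped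
    (∃ x y : Fin r → W,
      (∃ fx : F, Finset.image x Finset.univ = hedgeSet r gedge fx) ∧
      (∃ fy : F, Finset.image y Finset.univ = hedgeSet r gedge fy) ∧
      (∀ i j : Fin r, π (i, j) = (x j, y i))) := by
  have : NeZero r := ⟨by omega⟩
  have hrow := IsHypHom.row_isLine (gedge := gedge) hhom
  have hcol := IsHypHom.col_isLine (gedge := gedge) hhom
  rcases forall_row_isVerticalLine_or_forall_row_isHorizontalLine hr hinj hrow hcol
    with hrowV | hrowH <;>
  rcases forall_row_isVerticalLine_or_forall_row_isHorizontalLine (π := fun p => π p.swap)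
    hr hinj hcol hrow with hcolV | hcolH
  · exact .inl (exists_forall_image_eq_of_isVerticalLine hr hlinear htriangle hinj hgridfree
      hrowV hcolV)
  · exact .inr (.inl (exists_eq_mk_of_row_isVerticalLine_of_col_isHorizontalLine hrowV hcolH))
  · obtain ⟨x, y, hx, hy, hxy⟩ :=
      exists_eq_mk_of_row_isVerticalLine_of_col_isHorizontalLine (π := fun p => π p.swap)
        hcolV hrowH
    exact .inr (.inr ⟨x, y, hx, hy, fun i j => hxy j i⟩)
  · exact .inl (exists_forall_image_eq_of_isHorizontalLine hr hlinear htriangle hinj hgridfree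
      hrowH hcolH)

/-- Let `r ≥ 3` and let `G` be a linear `r`-graph containing neither a triangle nor
the grid `H_r` as a subgraph. Then every homomorphism `π` from `H_r` to `G □ G`
either maps all of `H_r` into a single (horizontal or vertical) edge of `G □ G`, or
maps the vertices `(i,j)` of `H_r` to vertices `(x i, y j)` of `G □ G` (or, after
swapping the roles of rows and columns, to `(x j, y i)`), where `{x₁,…,x_r}` and
`{y₁,…,y_r}` are edges of `G`. -/
theorem grid_hom_to_box_classification
    {W F : Type} [Fintype W] [Fintype F] (r : ℕ) (hr : 3 ≤ r)
    (gedge : F → Fin r → W) (hinj : ∀ f, Function.Injective (gedge f))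
    (hlinear : ∀ f f' : F, f ≠ f' →
      (hedgeSet r gedge f ∩ hedgeSet r gedge f').card ≤ 1)
    (htriangle : ¬ ∃ f₁ f₂ f₃ : F,
      (hedgeSet r gedge f₁ ∩ hedgeSet r gedge f₂).card = 1 ∧
      (hedgeSet r gedge f₁ ∩ hedgeSet r gedge f₃).card = 1 ∧
      (hedgeSet r gedge f₂ ∩ hedgeSet r gedge f₃).card = 1 ∧
      hedgeSet r gedge f₁ ∩ hedgeSet r gedge f₂ ∩ hedgeSet r gedge f₃ = ∅)
    (hgridfree : ¬ ∃ ψ : Fin r × Fin r → W, Function.Injective ψ ∧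
      ∀ e : Fin r ⊕ Fin r, ∃ f : F,
        Finset.image ψ (hedgeSet r (gridEdge r) e) = hedgeSet r gedge f)
    (π : Fin r × Fin r → W × W)
    (hhom : ∀ e : Fin r ⊕ Fin r, ∃ e' : F × W ⊕ W × F,
      Finset.image π (hedgeSet r (gridEdge r) e) = hedgeSet r (boxEdge r gedge) e') :
    -- first type: `π` maps all of `H_r` into a single edge of `G □ G`
    (∃ e' : F × W ⊕ W × F, ∀ e : Fin r ⊕ Fin r,
      Finset.image π (hedgeSet r (gridEdge r) e) = hedgeSet r (boxEdge r gedge) e') ∨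
    -- second type: `π (i,j) = (x i, y j)` with `x`, `y` enumerating edges of `G`
    (∃ x y : Fin r → W,
      (∃ fx : F, Finset.image x Finset.univ = hedgeSet r gedge fx) ∧
      (∃ fy : F, Finset.image y Finset.univ = hedgeSet r gedge fy) ∧
      (∀ i j : Fin r, π (i, j) = (x i, y j))) ∨
    -- second type with the roles of rows and columns swapped
    (∃ x y : Fin r → W,
      (∃ fx : F, Finset.image x Finset.univ = hedgeSet r gedge fx) ∧
      (∃ fy : F, Finset.image y Finset.univ = hedgeSet r gedge fy) ∧
      (∀ i j : Fin r, π (i, j) = (x j, y i))) :=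
  grid_hom_to_box_classification_general r hr gedge hinj hlinear htriangle hgridfree π hhom
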